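/- Let N = {1, ..., n} with n ≥ 2, let Γ be the directed cycle on N with edge set {(i, i+1) : i = 1, ..., n-1} ∪ {(n, 1)}, and for k ∈ ℕ define the TU-game v_k : 2^N → ℝ by v_k(S) = |S|^k (with v_k(∅) = 0; for k = 0 set v_0(S) = 1 for S ≠ ∅). Then the Shapley value of the digraph game (v_k, Γ) assigns to every player i ∈ N the amount n^{k-1}; in particular Sh(v_0, Γ)_i = 1/n and Sh(v_1, Γ)_i = 1 for every i. -/

import Mathlib

/-- Edge relation of the directed cycle `(1, 2, ..., n, 1)` on `Fin n`:
there is a directed edge from `i` to `i + 1` (mod `n`). -/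
def cycleEdge (n : ℕ) [NeZero n] (i j : Fin n) : Prop := j = i + 1

/-- `j` is a successor of `i` in the restriction of the cycle digraph to the
coalition `S`, i.e. there is a directed path from `i` to `j` using only
players of `S`. -/
def isSuccessorIn (n : ℕ) [NeZero n] (S : Set (Fin n)) (i j : Fin n) : Prop :=
  Relation.TransGen (fun a b => a ∈ S ∧ b ∈ S ∧ cycleEdge n a b) i j

/-- `i` dominates `j` in the restriction of the cycle digraph to `S`:
`j` is a successor of `i` but `i` is not a successor of `j`. -/
def dominatesIn (n : ℕ) [NeZero n] (S : Set (Fin n)) (i j : Fin n) : Prop :=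
  isSuccessorIn n S i j ∧ ¬ isSuccessorIn n S j i

/-- `P̄_π(i)`: the set of players whose position under `π` is at most that of `i`
(including `i` itself). -/
def Pbar {n : ℕ} (π : Equiv.Perm (Fin n)) (i : Fin n) : Set (Fin n) := {j | π j ≤ π i}

/-- `P_π(i)`: the set of players whose position under `π` is strictly less than
that of `i`. -/
def Pset {n : ℕ} (π : Equiv.Perm (Fin n)) (i : Fin n) : Set (Fin n) := {j | π j < π i}

/-- A permutation `π` is consistent with the directed cycle on `Fin n` if for
every player `i`, no player `j ∈ P̄_π(i)` dominates `i` in the restriction of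
the cycle digraph to `P̄_π(i)`. -/
def consistent (n : ℕ) [NeZero n] (π : Equiv.Perm (Fin n)) : Prop :=
  ∀ i : Fin n, ∀ j ∈ Pbar π i, ¬ dominatesIn n (Pbar π i) j i


/-! On the directed cycle, a player `i` whose position is not the last one must enter after
its predecessor `i - 1`: otherwise `i - 1 ∈ P̄_π(i)` dominates `i` through the edge `(i - 1, i)`,
unless `i` reaches `i - 1` inside `P̄_π(i)`, which forces `P̄_π(i)` to be the whole cycle.
Hence the consistent orders are exactly the `n` orders `π j = c - j` that enter the players
backwards along the cycle. Over these, each player occupies each position `p` exactly once, so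
the marginal contributions `(p + 1)^k - p^k` telescope to `n^k`. -/

open Fin.NatCast Fin.CommRing

theorem ncard_Pbar {n : ℕ} (π : Equiv.Perm (Fin n)) (i : Fin n) :
    (Pbar π i).ncard = π i + 1 := by
  rw [show Pbar π i = π ⁻¹' Set.Iic (π i) from rfl,
    Set.ncard_preimage_of_injective_subset_range π.injective (by simp),
    ← Finset.coe_Iic, Set.ncard_coe_finset, Fin.card_Iic]

theorem ncard_Pset {n : ℕ} (π : Equiv.Perm (Fin n)) (i : Fin n) :
    (Pset π i).ncard = π i := by
  rw [show Pset π i = π ⁻¹' Set.Iio (π i) from rfl,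
    Set.ncard_preimage_of_injective_subset_range π.injective (by simp),
    ← Finset.coe_Iio, Set.ncard_coe_finset, Fin.card_Iio]

theorem Equiv.subLeft_injective {G : Type*} [AddGroup G] :
    Function.Injective (Equiv.subLeft : G → Equiv.Perm G) :=
  fun a b h => by simpa using DFunLike.congr_fun h 0

section Cycle

variable {n : ℕ} [NeZero n]

theorem isSuccessorIn_iff {S : Set (Fin n)} {i j : Fin n} :
    isSuccessorIn n S i j ↔ ∃ m : ℕ, 0 < m ∧ j = i + m ∧ ∀ t ≤ m, i + (t : Fin n) ∈ S := by
  constructor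
  · intro h
    induction h with
    | single h =>
      obtain ⟨hi, hj, rfl⟩ : _ ∈ S ∧ _ ∈ S ∧ _ = i + 1 := h
      refine ⟨1, one_pos, by simp, fun t ht => ?_⟩
      interval_cases t
      · simpa using hi
      · simpa using hj
    | tail _ hbc ih =>
      obtain ⟨m, -, rfl, hm⟩ := ih
      obtain ⟨-, hc, rfl⟩ : _ ∈ S ∧ _ ∈ S ∧ _ = i + m + 1 := hbc
      refine ⟨m + 1, m.succ_pos, by push_cast; ring, fun t ht => ?_⟩
      rcases ht.lt_or_eq with ht | rfl
      · exact hm t (Nat.le_of_lt_succ ht)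
      · simpa [← add_assoc] using hc
  · rintro ⟨m, hm, rfl, hS⟩
    induction m with
    | zero => exact absurd hm (lt_irrefl 0)
    | succ m ih =>
      have edge : i + m ∈ S ∧ i + (m + 1 : ℕ) ∈ S ∧ cycleEdge n (i + m) (i + (m + 1 : ℕ)) :=
        ⟨hS m m.le_succ, hS _ le_rfl, by simp [cycleEdge, add_assoc]⟩
      rcases m.eq_zero_or_pos with rfl | hm₀
      · simp only [Nat.cast_zero, add_zero] at edge ⊢
        exact .single edge
      · exact (ih hm₀ fun t ht => hS t (ht.trans m.le_succ)).tail edge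

theorem eq_univ_of_isSuccessorIn_sub_one {S : Set (Fin n)} {i : Fin n}
    (h : isSuccessorIn n S i (i - 1)) : S = Set.univ := by
  obtain ⟨m, -, hm, hS⟩ := isSuccessorIn_iff.1 h
  have hdvd : n ∣ m + 1 := by
    rw [← Fin.natCast_eq_zero]
    push_cast
    linear_combination -hm
  have hmn := Nat.le_of_dvd m.succ_pos hdvd
  refine Set.eq_univ_of_forall fun x => ?_
  simpa using hS (x - i).val (by omega)

theorem consistent.apply_lt_apply_sub_one {π : Equiv.Perm (Fin n)} (hπ : consistent n π)
    {i : Fin n} (hi : π i ≠ ⊤) : π i < π (i - 1) := by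
  by_contra! hle
  have hback : isSuccessorIn n (Pbar π i) i (i - 1) := by
    by_contra hno
    exact hπ i (i - 1) hle ⟨.single ⟨hle, le_refl (π i), (sub_add_cancel i 1).symm⟩, hno⟩
  have hlast : π.symm ⊤ ∈ Pbar π i := eq_univ_of_isSuccessorIn_sub_one hback ▸ Set.mem_univ _
  exact hi (top_le_iff.1 (by simpa [Pbar] using hlast))

theorem consistent.eq_subLeft {π : Equiv.Perm (Fin n)} (hπ : consistent n π) :
    π = Equiv.subLeft (π.symm ⊤ - 1) := by
  obtain ⟨m, rfl⟩ : ∃ m, n = m + 1 := Nat.exists_eq_succ_of_ne_zero (NeZero.ne n)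
  set ℓ := π.symm ⊤
  -- the positions of `ℓ - 1, ℓ - 2, …, ℓ`, read backwards along the cycle from the last player
  set g : Fin (m + 1) → Fin (m + 1) := fun t => π (ℓ - 1 - t)
  have hg : StrictMono g := Fin.strictMono_iff_lt_succ.2 fun t => by
    have hne : π (ℓ - 1 - t.castSucc) ≠ ⊤ := by
      rw [ne_eq, ← π.eq_symm_apply]
      intro h
      apply t.succ_ne_zero
      rw [← Fin.coeSucc_eq_succ]
      linear_combination -h
    have hsucc : ℓ - 1 - t.succ = ℓ - 1 - t.castSucc - 1 := by
      rw [← Fin.coeSucc_eq_succ]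
      ring
    simpa only [g, hsucc] using hπ.apply_lt_apply_sub_one hne
  have hsurj : Function.Surjective g := fun p => ⟨ℓ - 1 - π.symm p, by simp [g]⟩
  ext j
  simpa [g] using Fin.coe_orderIso_apply (hg.orderIsoOfSurjective g hsurj) (ℓ - 1 - j)

theorem mem_Pbar_subLeft_iff {c i j : Fin n} :
    j ∈ Pbar (Equiv.subLeft c) i ↔ (j - i).val ≤ (c - i).val := by
  have hsplit : c - i = (c - j) + (j - i) := by ring
  simp only [Pbar, Set.mem_ofPred_eq, Equiv.subLeft_apply, Fin.le_def, hsplit, Fin.val_add_eq_ite]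
  split_ifs <;> omega

theorem consistent_subLeft (c : Fin n) : consistent n (Equiv.subLeft c) := by
  rintro i j hj ⟨hji, hij⟩
  rcases eq_or_ne j i with rfl | hne
  · exact hij hji
  apply hij
  refine isSuccessorIn_iff.2 ⟨(j - i).val, ?_, by simp, fun t ht => mem_Pbar_subLeft_iff.2 ?_⟩
  · exact Nat.pos_of_ne_zero fun h => hne (sub_eq_zero.1 (Fin.ext h))
  · have hdist := mem_Pbar_subLeft_iff.1 hj
    simp only [add_sub_cancel_left, Fin.val_natCast]
    exact (Nat.mod_le t n).trans (ht.trans hdist)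

theorem setOf_consistent_eq_range :
    {π : Equiv.Perm (Fin n) | consistent n π} = Set.range Equiv.subLeft := by
  ext π
  constructor
  · intro hπ
    exact ⟨_, hπ.eq_subLeft.symm⟩
  · rintro ⟨c, rfl⟩
    exact consistent_subLeft c

theorem ncard_setOf_consistent : {π : Equiv.Perm (Fin n) | consistent n π}.ncard = n := by
  rw [setOf_consistent_eq_range, Set.ncard_range_of_injective Equiv.subLeft_injective, Nat.card_fin]

theorem sum_consistent_apply {M : Type*} [AddCommMonoid M] (f : Fin n → M) (i : Fin n) :
    ∑ π ∈ (Set.toFinite {π : Equiv.Perm (Fin n) | consistent n π}).toFinset, f (π i) =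
      ∑ p, f p := by
  have hperms : (Set.toFinite {π : Equiv.Perm (Fin n) | consistent n π}).toFinset =
      Finset.univ.image Equiv.subLeft := by
    ext
    simp [setOf_consistent_eq_range]
  rw [hperms, Finset.sum_image Equiv.subLeft_injective.injOn]
  exact Fintype.sum_equiv (Equiv.subRight i) _ _ fun c => rfl

end Cycle

theorem cycle_shapley_value_pow_general (n : ℕ) [NeZero n] (k : ℕ) (i : Fin n) :
    (1 / (Set.ncard {π : Equiv.Perm (Fin n) | consistent n π} : ℝ)) *
        ∑ π ∈ (Set.toFinite {π : Equiv.Perm (Fin n) | consistent n π}).toFinset,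
          ((if (Pbar π i).ncard = 0 then 0 else ((Pbar π i).ncard : ℝ) ^ k)
            - (if (Pset π i).ncard = 0 then 0 else ((Pset π i).ncard : ℝ) ^ k))
      = (n : ℝ) ^ ((k : ℤ) - 1) := by
  set v : ℕ → ℝ := fun s => if s = 0 then 0 else (s : ℝ) ^ k
  have hn : (n : ℝ) ≠ 0 := Nat.cast_ne_zero.2 (NeZero.ne n)
  calc _ = 1 / (n : ℝ) * ∑ p : Fin n, (v (p + 1) - v p) := by
        simp only [ncard_Pbar, ncard_Pset, ncard_setOf_consistent]
        exact congrArg _ (sum_consistent_apply (fun p : Fin n => v (p + 1) - v p) i)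
    _ = 1 / (n : ℝ) * (v n - v 0) := by
        rw [Fin.sum_univ_eq_sum_range (fun p => v (p + 1) - v p), Finset.sum_range_sub]
    _ = (n : ℝ) ^ ((k : ℤ) - 1) := by
        simp only [v, if_pos, NeZero.ne n, if_false, sub_zero]
        rw [zpow_sub₀ hn, zpow_natCast, zpow_one]
        field_simp

/-- For `k ∈ ℕ`, the game `v_k(S) = |S|^k` (with the convention `v_k(∅) = 0`,
so in particular `v_0(S) = 1` for `S ≠ ∅`) on the directed `n`-cycle has Shapley
value `n^(k-1)` for every player `i` (where the exponent `k - 1` is taken in `ℤ`,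
so `k = 0` gives `1/n` and `k = 1` gives `1`). -/
theorem cycle_shapley_value_pow (n : ℕ) [NeZero n] (hn : 2 ≤ n) (k : ℕ) (i : Fin n) :
    (1 / (Set.ncard {π : Equiv.Perm (Fin n) | consistent n π} : ℝ)) *
        ∑ π ∈ (Set.toFinite {π : Equiv.Perm (Fin n) | consistent n π}).toFinset,
          ((if (Pbar π i).ncard = 0 then 0 else ((Pbar π i).ncard : ℝ) ^ k)
            - (if (Pset π i).ncard = 0 then 0 else ((Pset π i).ncard : ℝ) ^ k))
      = (n : ℝ) ^ ((k : ℤ) - 1) :=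
  cycle_shapley_value_pow_general n k i
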